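/- Let (X,d) be a bounded metric space with Samuel compactification (S(X), τ, ∂). Suppose (a_n) is a sequence in S(X) and δ > 0 is such that ∂(a_n, a_m) > δ for all n ≠ m. Then for every ε with 0 < ε < δ/2 there exist a subsequence (b_n) of (a_n) and τ-open sets (U_n) in S(X) such that b_n ∈ U_n for all n and ∂(U_n, U_m) ≥ ε for all n ≠ m. -/

import Mathlib

/-!
Let `b` be a weak* cluster point of `(a n)`. Since `∂(a n, a m) > δ`, of any two terms at least
one is `δ/2`-far from `b` along some bounded `1`-Lipschitz `f`. As `b` is a cluster point, one
can choose inductively `φ 0 < φ 1 < ⋯` and functions `g n` such that `a (φ n)` is `δ/2`-far from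
`b` along `g n`, while every later `a (φ m)` is `η`-close to `b` along `g 0, …, g (m-1)`. Then
`U n = {u | |u(g n) - a (φ n)(g n)| < η, |u(g i) - b(g i)| < η for i < n}` is open, contains
`a (φ n)`, and for `n < m` the function `g n` separates `U n` from `U m` by `δ/2 - 2η = ε`.
-/

open scoped BoundedContinuousFunction
noncomputable section

variable (X : Type*) [MetricSpace X]

/-- The star subalgebra of bounded *uniformly continuous* complex-valued functions
inside the C*-algebra of bounded continuous functions. -/
def UCB : StarSubalgebra ℂ (X →ᵇ ℂ) where
  carrier := {f | UniformContinuous ⇑f}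
  mul_mem' := by
    intro a b ha hb
    simp only [Set.mem_setOf_eq] at *
    have hbd : Bornology.IsBounded (Set.range fun x => ((a x : ℂ), (b x : ℂ))) := by
      refine Bornology.IsBounded.subset ((a.isBounded_range).prod (b.isBounded_range)) ?_
      rintro p ⟨x, rfl⟩
      exact ⟨⟨x, rfl⟩, ⟨x, rfl⟩⟩
    set K := closure (Set.range fun x => ((a x : ℂ), (b x : ℂ))) with hK
    have hKc : IsCompact K := hbd.isCompact_closure
    haveI : CompactSpace K := isCompact_iff_compactSpace.mp hKc
    have hmul : UniformContinuous fun p : K => (p : ℂ × ℂ).1 * (p : ℂ × ℂ).2 :=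
      CompactSpace.uniformContinuous_of_continuous
        ((continuous_fst.comp continuous_subtype_val).mul
          (continuous_snd.comp continuous_subtype_val))
    have hF : UniformContinuous fun x : X => (⟨(a x, b x), subset_closure ⟨x, rfl⟩⟩ : K) :=
      (ha.prodMk hb).subtype_mk _
    have : UniformContinuous fun x : X => a x * b x := hmul.comp hF
    simp only [BoundedContinuousFunction.coe_mul]; exact this
  one_mem' := by
    simp only [Set.mem_setOf_eq, BoundedContinuousFunction.coe_one]; exact (uniformContinuous_const : UniformContinuous fun _ : X => (1 : ℂ))
  add_mem' := by
    intro a b ha hb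
    simp only [Set.mem_setOf_eq] at *
    simp only [BoundedContinuousFunction.coe_add]; exact ha.add hb
  zero_mem' := by
    simp only [Set.mem_setOf_eq, BoundedContinuousFunction.coe_zero]; exact (uniformContinuous_const : UniformContinuous fun _ : X => (0 : ℂ))
  algebraMap_mem' := by
    intro c
    have : ⇑(algebraMap ℂ (X →ᵇ ℂ) c) = fun _ : X => c := by
      ext x; simp [Algebra.algebraMap_eq_smul_one]
    simp only [Set.mem_setOf_eq, this]
    exact uniformContinuous_const
  star_mem' := by
    intro a ha
    simp only [Set.mem_setOf_eq] at *
    have : UniformContinuous fun x : X => (starRingEnd ℂ) (a x) :=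
      (Complex.isometry_conj.uniformContinuous).comp ha
    simp only [BoundedContinuousFunction.coe_star]; exact this

/-- The Samuel compactification of a metric space `X`: the character space (Gelfand spectrum)
of the algebra of bounded uniformly continuous functions, with the weak* topology. -/
def Samuel : Type _ := WeakDual.characterSpace ℂ (UCB X)

instance : TopologicalSpace (Samuel X) := by unfold Samuel; infer_instance

instance : FunLike (Samuel X) (UCB X) ℂ := by unfold Samuel; infer_instance

/-- Evaluation at a point of `X`, as a continuous linear functional on `UCB X`. -/
def samuelEvalCLM (x : X) : WeakDual ℂ (UCB X) :=
  LinearMap.mkContinuous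
    { toFun := fun f => (f : X →ᵇ ℂ) x
      map_add' := fun f g => by simp
      map_smul' := fun c f => by simp } 1
    (fun f => by rw [one_mul]; exact BoundedContinuousFunction.norm_coe_le_norm (f : X →ᵇ ℂ) x)

lemma samuelEvalCLM_apply (x : X) (f : UCB X) : samuelEvalCLM X x f = (f : X →ᵇ ℂ) x := rfl

/-- Evaluation at a point of `X`, as a character of `UCB X`:
this is the canonical embedding of `X` into its Samuel compactification. -/
def samuelEmbed (x : X) : Samuel X :=
  ⟨samuelEvalCLM X x, by
    refine ⟨fun h => ?_, fun f g => ?_⟩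
    · have h1 : samuelEvalCLM X x 1 = 0 := by rw [h]; rfl
      have h2 : samuelEvalCLM X x 1 = 1 := rfl
      rw [h1] at h2
      exact zero_ne_one h2
    · simp only [samuelEvalCLM_apply]
      simp⟩

/-- The bounded `1`-Lipschitz real-valued functions on `X`. -/
def Lip1 : Type _ := {f : X →ᵇ ℝ // LipschitzWith 1 ⇑f}

/-- A bounded `1`-Lipschitz real function, regarded as an element of `UCB X`. -/
def toUCB (f : Lip1 X) : UCB X :=
  ⟨BoundedContinuousFunction.comp Complex.ofReal
      (Complex.isometry_ofReal.lipschitz) f.1,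
   by
     have : UniformContinuous fun x : X => (f.1 x : ℂ) :=
       Complex.isometry_ofReal.uniformContinuous.comp f.2.uniformContinuous
     exact this⟩

/-- The topometric distance `∂` on the Samuel compactification:
`∂(a,b) = sup {|a(f) - b(f)| : f : X → ℝ bounded and 1-Lipschitz}`. -/
def samuelDist (a b : Samuel X) : ℝ :=
  ⨆ f : Lip1 X, ‖a (toUCB X f) - b (toUCB X f)‖

/-- The `∂`-gap between two subsets of the Samuel compactification. -/
def samuelSetDist (A B : Set (Samuel X)) : ℝ :=
  sInf {r | ∃ a ∈ A, ∃ b ∈ B, r = samuelDist X a b}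

open Filter Topology Metric

section SeparatedNeighborhoods

variable {S ι E : Type*} [TopologicalSpace S] [PseudoMetricSpace E] (ev : ι → S → E)
  {a : ℕ → S} {δ ε : ℝ}

lemma lt_dist_or_lt_dist_of_lt_dist {x y z : E} (h : δ < dist x y) :
    δ / 2 < dist x z ∨ δ / 2 < dist y z := by
  by_contra! hxy
  linarith [dist_triangle_right x y z]

lemma exists_far_from_mapClusterPt {b : S} (hb : MapClusterPt b atTop a)
    (hsep : ∀ n m, n ≠ m → ∃ f, δ < dist (ev f (a n)) (ev f (a m)))
    {W : Set S} (hW : W ∈ 𝓝 b) (N : ℕ) :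
    ∃ m, N ≤ m ∧ a m ∈ W ∧ ∃ f, δ / 2 < dist (ev f (a m)) (ev f b) := by
  have hfreq : ∃ᶠ n in atTop, a n ∈ W := mapClusterPt_iff_frequently.mp hb W hW
  obtain ⟨m₁, hNm₁, hm₁W⟩ := frequently_atTop.mp hfreq N
  obtain ⟨m₂, hm₁m₂, hm₂W⟩ := frequently_atTop.mp hfreq (m₁ + 1)
  obtain ⟨f, hf⟩ := hsep m₁ m₂ (by omega)
  rcases lt_dist_or_lt_dist_of_lt_dist hf with h | h
  · exact ⟨m₁, hNm₁, hm₁W, f, h⟩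
  · exact ⟨m₂, by omega, hm₂W, f, h⟩

lemma exists_strictMono_far_then_close (hev : ∀ f, Continuous (ev f)) {b : S}
    (hb : MapClusterPt b atTop a)
    (hsep : ∀ n m, n ≠ m → ∃ f, δ < dist (ev f (a n)) (ev f (a m))) {η : ℝ} (hη : 0 < η) :
    ∃ φ : ℕ → ℕ, StrictMono φ ∧ ∃ g : ℕ → ι,
      (∀ n, δ / 2 < dist (ev (g n) (a (φ n))) (ev (g n) b)) ∧
      ∀ n m, n < m → dist (ev (g n) (a (φ m))) (ev (g n) b) < η := by
  classical
  have hnhds (s : Finset ι) : {u | ∀ f ∈ s, dist (ev f u) (ev f b) < η} ∈ 𝓝 b :=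
    (eventually_all_finset s).mpr fun f _ =>
      (hev f).continuousAt.eventually (ball_mem_nhds (ev f b) hη)
  choose M hM hMclose G hG using fun p : ℕ × Finset ι =>
    exists_far_from_mapClusterPt ev hb hsep (hnhds p.2) p.1
  -- `st n` = (lower bound for the `n`-th index, the functions `g 0, …, g (n-1)` chosen so far)
  let st : ℕ → ℕ × Finset ι := fun n =>
    Nat.rec (0, ∅) (fun _ p => (M p + 1, insert (G p) p.2)) n
  have hmono : Monotone fun n => (st n).2 :=
    monotone_nat_of_le_succ fun n => Finset.subset_insert _ _
  refine ⟨fun n => M (st n), strictMono_nat_of_lt_succ fun n => hM (st (n + 1)),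
    fun n => G (st n), fun n => hG (st n), fun n m hnm => hMclose (st m) _ ?_⟩
  exact hmono (Nat.succ_le_of_lt hnm) (Finset.mem_insert_self _ _)

theorem exists_strictMono_isOpen_separated [CompactSpace S] (hev : ∀ f, Continuous (ev f))
    (hsep : ∀ n m, n ≠ m → ∃ f, δ < dist (ev f (a n)) (ev f (a m))) (hεδ : ε < δ / 2) :
    ∃ φ : ℕ → ℕ, StrictMono φ ∧ ∃ U : ℕ → Set S, (∀ n, IsOpen (U n)) ∧ (∀ n, a (φ n) ∈ U n) ∧
      ∀ n m, n ≠ m → ∀ u ∈ U n, ∀ v ∈ U m, ∃ f, ε < dist (ev f u) (ev f v) := by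
  obtain ⟨b, hb⟩ : ∃ b, MapClusterPt b atTop a := exists_clusterPt_of_compactSpace _
  have hη : 0 < (δ / 2 - ε) / 2 := by linarith
  set η := (δ / 2 - ε) / 2 with hη_def
  obtain ⟨φ, hφ, g, hfar, hclose⟩ := exists_strictMono_far_then_close ev hev hb hsep hη
  let U n := ev (g n) ⁻¹' ball (ev (g n) (a (φ n))) η ∩
    ⋂ i ∈ Finset.range n, ev (g i) ⁻¹' ball (ev (g i) b) η
  have hU (n : ℕ) : IsOpen (U n) :=
    (isOpen_ball.preimage (hev _)).inter
      (isOpen_biInter_finset fun i _ => isOpen_ball.preimage (hev _))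
  have haU (n : ℕ) : a (φ n) ∈ U n :=
    ⟨mem_ball_self hη, Set.mem_iInter₂.mpr fun i hi =>
      hclose i n (Finset.mem_range.mp hi)⟩
  have hsepU (n m : ℕ) (hnm : n < m) (u : S) (hu : u ∈ U n) (v : S) (hv : v ∈ U m) :
      ε < dist (ev (g n) u) (ev (g n) v) := by
    have hu' : dist (ev (g n) u) (ev (g n) (a (φ n))) < η := hu.1
    have hv' : dist (ev (g n) v) (ev (g n) b) < η :=
      Set.mem_iInter₂.mp hv.2 n (Finset.mem_range.mpr hnm)
    have htri := dist_triangle4 (ev (g n) (a (φ n))) (ev (g n) u) (ev (g n) v) (ev (g n) b)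
    linarith [hfar n, dist_comm (ev (g n) u) (ev (g n) (a (φ n)))]
  refine ⟨φ, hφ, U, hU, haU, fun n m hnm u hu v hv => ?_⟩
  rcases hnm.lt_or_gt with h | h
  · exact ⟨g n, hsepU n m h u hu v hv⟩
  · exact ⟨g m, dist_comm (ev (g m) v) _ ▸ hsepU m n h v hv u hu⟩

end SeparatedNeighborhoods

theorem BoundedContinuousFunction.isClosed_setOf_uniformContinuous {α β : Type*} [UniformSpace α]
    [PseudoMetricSpace β] : IsClosed {f : α →ᵇ β | UniformContinuous f} :=
  isClosed_iff_frequently.mpr fun _ hf =>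
    (tendsto_iff_tendstoUniformly.mp tendsto_id).uniformContinuous hf

instance : CompleteSpace (UCB X) :=
  BoundedContinuousFunction.isClosed_setOf_uniformContinuous.completeSpace_coe

instance : CompactSpace (Samuel X) := by unfold Samuel; infer_instance

instance : Nonempty (Lip1 X) := ⟨⟨0, LipschitzWith.const' 0⟩⟩

lemma continuous_samuel_apply (F : UCB X) : Continuous fun u : Samuel X => u F :=
  (WeakDual.eval_continuous F).comp continuous_subtype_val

lemma nonempty_of_samuel (u : Samuel X) : Nonempty X := by
  by_contra hX
  rw [not_nonempty_iff] at hX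
  have h10 : (1 : UCB X) = 0 := Subtype.ext (BoundedContinuousFunction.ext hX.elim)
  have h1 := map_one (show WeakDual.characterSpace ℂ (UCB X) from u)
  rw [h10, map_zero] at h1
  exact zero_ne_one h1

lemma norm_toUCB_sub_const_le (hbdd : Bornology.IsBounded (Set.univ : Set X)) (f : Lip1 X)
    (x₀ : X) : ‖toUCB X f - ((f.1 x₀ : ℝ) : ℂ) • 1‖ ≤ diam (Set.univ : Set X) := by
  refine (BoundedContinuousFunction.norm_le diam_nonneg).mpr fun x => ?_
  simp only [toUCB, Complex.coe_smul, AddSubgroupClass.subtype_apply, AddSubgroupClass.coe_sub,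
    SetLike.val_smul_of_tower, OneMemClass.coe_one, BoundedContinuousFunction.coe_sub,
    BoundedContinuousFunction.coe_smul, BoundedContinuousFunction.coe_one, Pi.one_apply,
    Complex.real_smul, mul_one, Pi.sub_apply, BoundedContinuousFunction.comp_apply]
  rw [← Complex.ofReal_sub, Complex.norm_real, ← dist_eq_norm]
  calc dist (f.1 x) (f.1 x₀) ≤ dist x x₀ := by simpa using f.2.dist_le_mul x x₀
    _ ≤ diam Set.univ := dist_le_diam_of_mem hbdd trivial trivial

lemma samuelDist_bddAbove (hbdd : Bornology.IsBounded (Set.univ : Set X)) (u v : Samuel X) :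
    BddAbove (Set.range fun f : Lip1 X => ‖u (toUCB X f) - v (toUCB X f)‖) := by
  obtain ⟨x₀⟩ := nonempty_of_samuel X u
  let χ : Samuel X → StrongDual ℂ (UCB X) := fun w =>
    WeakDual.toStrongDual (show WeakDual.characterSpace ℂ (UCB X) from w : WeakDual ℂ (UCB X))
  refine ⟨‖χ u - χ v‖ * diam (Set.univ : Set X), ?_⟩
  rintro _ ⟨f, rfl⟩
  set c : ℂ := ((f.1 x₀ : ℝ) : ℂ)
  -- characters are unital, so shifting `f` by the constant `f x₀`, which brings its sup norm
  -- down to `diam X`, does not change `u f - v f`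
  have hχ : u (toUCB X f) - v (toUCB X f) = (χ u - χ v) (toUCB X f - c • 1) := by
    have h1 (w : Samuel X) : χ w 1 = 1 := map_one (show WeakDual.characterSpace ℂ (UCB X) from w)
    simp only [sub_apply, map_sub, map_smul, h1, sub_self, smul_zero, sub_zero]
    rfl
  dsimp only
  rw [hχ]
  exact ((χ u - χ v).le_opNorm _).trans
    (mul_le_mul_of_nonneg_left (norm_toUCB_sub_const_le X hbdd f x₀) (norm_nonneg _))

lemma dist_apply_le_samuelDist (hbdd : Bornology.IsBounded (Set.univ : Set X))
    (u v : Samuel X) (f : Lip1 X) : dist (u (toUCB X f)) (v (toUCB X f)) ≤ samuelDist X u v :=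
  (dist_eq_norm _ _).trans_le (le_ciSup (samuelDist_bddAbove X hbdd u v) f)

lemma exists_lt_dist_of_lt_samuelDist {u v : Samuel X} {δ : ℝ} (h : δ < samuelDist X u v) :
    ∃ f : Lip1 X, δ < dist (u (toUCB X f)) (v (toUCB X f)) := by
  simpa only [dist_eq_norm] using exists_lt_of_lt_ciSup h

lemma le_samuelSetDist {A B : Set (Samuel X)} {x y : Samuel X} (hx : x ∈ A) (hy : y ∈ B)
    {ε : ℝ} (h : ∀ u ∈ A, ∀ v ∈ B, ε ≤ samuelDist X u v) : ε ≤ samuelSetDist X A B :=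
  le_csInf ⟨_, x, hx, y, hy, rfl⟩ fun _ ⟨u, hu, v, hv, hr⟩ => hr ▸ h u hu v hv

theorem samuel_separating_open_sets (hbdd : Bornology.IsBounded (Set.univ : Set X))
    (a : ℕ → Samuel X) (δ : ℝ)
    (hsep : ∀ n m : ℕ, n ≠ m → samuelDist X (a n) (a m) > δ)
    (ε : ℝ) (hεδ : ε < δ / 2) :
    ∃ φ : ℕ → ℕ, StrictMono φ ∧
      ∃ U : ℕ → Set (Samuel X),
        (∀ n, IsOpen (U n)) ∧ (∀ n, a (φ n) ∈ U n) ∧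
        ∀ n m : ℕ, n ≠ m → ε ≤ samuelSetDist X (U n) (U m) := by
  obtain ⟨φ, hφ, U, hU, haU, hsepU⟩ := exists_strictMono_isOpen_separated
    (fun f (u : Samuel X) => u (toUCB X f)) (fun f => continuous_samuel_apply X (toUCB X f))
    (fun n m hnm => exists_lt_dist_of_lt_samuelDist X (hsep n m hnm)) hεδ
  refine ⟨φ, hφ, U, hU, haU, fun n m hnm => le_samuelSetDist X (haU n) (haU m) ?_⟩
  intro u hu v hv
  obtain ⟨f, hf⟩ := hsepU n m hnm u hu v hv
  exact hf.le.trans (dist_apply_le_samuelDist X hbdd u v f)
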